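/- There exists a cake-division instance with 3 agents, strictly positive subjective density functions u_1(x) = 5/3 − (8/3)·min(x, 1−x), u_2(x) = 3/2 − 2·min(x, 1−x), u_3(x) = 1 on [0,1], such that no allocation of the cake into three pieces is simultaneously balanced (each piece has Lebesgue measure 1/3), envy-free with respect to the subjective utilities, and Pareto optimal with respect to the subjective utilities. -/

import Mathlib

/-!
Let `outer = [0, 1/6) ∪ (5/6, 1]`, the part of the cake where `min x (1 - x) < 1/6`. Both ratios
`dens 0 / dens 1` and `dens 0 / dens 2` decrease in `min x (1 - x)`, so in a Pareto optimal
allocation agent `0` cannot hold a non-null part of the middle while agent `1` or `2` holds a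
non-null part of `outer`: swapping pieces worth the same to the other agent would strictly benefit
agent `0`. As `λ outer = 1/3`, balance then forces `A 0 = outer` a.e. Agent `1` values `outer` at
`4/9`, but `dens 1 ≤ 7/6` off `outer`, so her own piece is worth at most `7/18`: she envies agent `0`.
-/

open MeasureTheory Set

noncomputable def dens : Fin 3 → ℝ → ℝ :=
  ![fun x => 5 / 3 - 8 / 3 * min x (1 - x),
    fun x => 3 / 2 - 2 * min x (1 - x),
    fun _ => 1]

section Exchange

variable {ι α : Type*} [DecidableEq ι]

def exchange (A : ι → Set α) (i j : ι) (P Q : Set α) : ι → Set α :=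
  Function.update (Function.update A i (A i \ P ∪ Q)) j (A j \ Q ∪ P)

variable {A : ι → Set α} {i j : ι} {P Q : Set α}

lemma exchange_apply_left (hij : i ≠ j) : exchange A i j P Q i = A i \ P ∪ Q := by
  simp [exchange, hij]

lemma exchange_apply_right : exchange A i j P Q j = A j \ Q ∪ P := by
  simp [exchange]

lemma exchange_apply_of_ne {k : ι} (hki : k ≠ i) (hkj : k ≠ j) : exchange A i j P Q k = A k := by
  simp [exchange, hki, hkj]

end Exchange

section Allocation

variable {ι α : Type*} [MeasurableSpace α] (μ : Measure α)

structure IsAllocation (C : Set α) (A : ι → Set α) : Prop where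
  measurableSet : ∀ i, MeasurableSet (A i)
  subset : ∀ i, A i ⊆ C
  measure_sdiff_iUnion : μ (C \ ⋃ i, A i) = 0
  measure_inter : ∀ i j, i ≠ j → μ (A i ∩ A j) = 0

def ParetoDominates (u : ι → α → ℝ) (B A : ι → Set α) : Prop :=
  (∀ i, ∫ x in A i, u i x ∂μ ≤ ∫ x in B i, u i x ∂μ) ∧
    ∃ i, ∫ x in A i, u i x ∂μ < ∫ x in B i, u i x ∂μ

def IsParetoOptimal (C : Set α) (u : ι → α → ℝ) (A : ι → Set α) : Prop :=
  ∀ B, IsAllocation μ C B → ¬ ParetoDominates μ u B A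

variable {μ} {C F P Q S : Set α} {A : ι → Set α} {u : ι → α → ℝ} {i j : ι}

lemma IsAllocation.ae_eq_of_mem_of_mem [Countable ι] (hA : IsAllocation μ C A) :
    ∀ᵐ x ∂μ, ∀ k l, x ∈ A k → x ∈ A l → k = l := by
  simp only [ae_all_iff]
  intro k l
  by_cases hkl : k = l
  · exact Filter.Eventually.of_forall fun _ _ _ => hkl
  · filter_upwards [measure_eq_zero_iff_ae_notMem.1 (hA.measure_inter k l hkl)] with x hx hk hl
    exact absurd ⟨hk, hl⟩ hx

lemma IsAllocation.ae_subset_of_measure_inter_eq_zero [Countable ι] (hA : IsAllocation μ C A)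
    (hF : F ⊆ C) (h : ∀ j, j ≠ i → μ (A j ∩ F) = 0) : F ≤ᵐ[μ] A i := by
  have hout : ∀ᵐ x ∂μ, ∀ j, j ≠ i → x ∉ A j ∩ F := by
    simp only [ae_all_iff]
    exact fun j hj => measure_eq_zero_iff_ae_notMem.1 (h j hj)
  filter_upwards [measure_eq_zero_iff_ae_notMem.1 hA.measure_sdiff_iUnion, hout]
    with x hcov hx hxF
  obtain ⟨j, hj⟩ := mem_iUnion.1 (not_not.1 fun h => hcov ⟨hF hxF, h⟩)
  by_cases hji : j = i
  · exact hji ▸ hj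
  · exact absurd ⟨hj, hxF⟩ (hx j hji)

variable [DecidableEq ι]

lemma IsAllocation.exchange [Countable ι] (hA : IsAllocation μ C A) (hij : i ≠ j)
    (hPm : MeasurableSet P) (hQm : MeasurableSet Q) (hP : P ⊆ A i) (hQ : Q ⊆ A j) :
    IsAllocation μ C (exchange A i j P Q) where
  measurableSet k := by
    unfold _root_.exchange
    simp only [Function.update_apply]
    split_ifs
    exacts [((hA.measurableSet j).diff hQm).union hPm,
      ((hA.measurableSet i).diff hPm).union hQm, hA.measurableSet k]
  subset k := by
    unfold _root_.exchange
    simp only [Function.update_apply]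
    split_ifs
    exacts [union_subset (sdiff_subset.trans (hA.subset j)) (hP.trans (hA.subset i)),
      union_subset (sdiff_subset.trans (hA.subset i)) (hQ.trans (hA.subset j)), hA.subset k]
  measure_sdiff_iUnion := by
    refine measure_mono_null (sdiff_subset_sdiff_right fun x hxA => ?_) hA.measure_sdiff_iUnion
    obtain ⟨k, hk⟩ := mem_iUnion.1 hxA
    simp only [mem_iUnion, _root_.exchange, Function.update_apply]
    by_cases hxP : x ∈ P
    · exact ⟨j, by simp [hxP]⟩
    by_cases hxQ : x ∈ Q
    · exact ⟨i, by simp [hij, hxQ]⟩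
    refine ⟨k, ?_⟩
    split_ifs with hkj hki
    · subst hkj; exact Or.inl ⟨hk, hxQ⟩
    · subst hki; exact Or.inl ⟨hk, hxP⟩
    · exact hk
  measure_inter k l hkl := by
    refine measure_eq_zero_iff_ae_notMem.2 ?_
    filter_upwards [hA.ae_eq_of_mem_of_mem] with x hx ⟨hk, hl⟩
    simp only [_root_.exchange, Function.update_apply] at hk hl
    have := @hP x
    have := @hQ x
    split_ifs at hk hl <;> grind

lemma setIntegral_sdiff_union {f : α → ℝ} (hPm : MeasurableSet P) (hQm : MeasurableSet Q)
    (hP : P ⊆ S) (hSQ : μ (S ∩ Q) = 0) (hfS : IntegrableOn f S μ) (hfQ : IntegrableOn f Q μ) :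
    ∫ x in S \ P ∪ Q, f x ∂μ = ∫ x in S, f x ∂μ - ∫ x in P, f x ∂μ + ∫ x in Q, f x ∂μ := by
  rw [setIntegral_union₀ (measure_mono_null (inter_subset_inter_left _ sdiff_subset) hSQ)
    hQm.nullMeasurableSet (hfS.mono_set sdiff_subset) hfQ, setIntegral_sdiff hPm hfS hP]

lemma paretoDominates_exchange (hA : IsAllocation μ C A) (hij : i ≠ j)
    (hPm : MeasurableSet P) (hQm : MeasurableSet Q) (hP : P ⊆ A i) (hQ : Q ⊆ A j)
    (hu : ∀ k, IntegrableOn (u k) C μ)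
    (hi : ∫ x in P, u i x ∂μ < ∫ x in Q, u i x ∂μ)
    (hj : ∫ x in Q, u j x ∂μ ≤ ∫ x in P, u j x ∂μ) :
    ParetoDominates μ u (exchange A i j P Q) A := by
  have hint : ∀ k {T}, T ⊆ C → IntegrableOn (u k) T μ := fun k _ hT => (hu k).mono_set hT
  have hBi : ∫ x in exchange A i j P Q i, u i x ∂μ =
      ∫ x in A i, u i x ∂μ - ∫ x in P, u i x ∂μ + ∫ x in Q, u i x ∂μ := by
    rw [exchange_apply_left hij, setIntegral_sdiff_union hPm hQm hP
      (measure_mono_null (inter_subset_inter_right _ hQ) (hA.measure_inter i j hij))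
      (hint i (hA.subset i)) (hint i (hQ.trans (hA.subset j)))]
  have hBj : ∫ x in exchange A i j P Q j, u j x ∂μ =
      ∫ x in A j, u j x ∂μ - ∫ x in Q, u j x ∂μ + ∫ x in P, u j x ∂μ := by
    rw [exchange_apply_right, setIntegral_sdiff_union hQm hPm hQ
      (measure_mono_null (inter_subset_inter_right _ hP) (hA.measure_inter j i hij.symm))
      (hint j (hA.subset j)) (hint j (hP.trans (hA.subset i)))]
  refine ⟨fun k => ?_, i, by linarith⟩
  by_cases hki : k = i
  · subst hki; linarith
  by_cases hkj : k = j
  · subst hkj; linarith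
  rw [exchange_apply_of_ne hki hkj]

end Allocation

lemma setIntegral_pos_of_forall_pos {α : Type*} [MeasurableSpace α] {μ : Measure α}
    {f : α → ℝ} {s : Set α} (hs : MeasurableSet s) (hμ : μ s ≠ 0) (hf : IntegrableOn f s μ)
    (hpos : ∀ x ∈ s, 0 < f x) : 0 < ∫ x in s, f x ∂μ := by
  rw [setIntegral_pos_iff_support_of_nonneg_ae
    ((ae_restrict_iff' hs).2 (ae_of_all _ fun x hx => (hpos x hx).le)) hf]
  exact (pos_iff_ne_zero.2 hμ).trans_le (measure_mono fun x hx => ⟨(hpos x hx).ne', hx⟩)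

section RealLine

variable {μ : Measure ℝ} [NullSingletonClass μ]

lemma exists_subset_setIntegral_eq {f : ℝ → ℝ} {S : Set ℝ} {a b c : ℝ} (hab : a ≤ b)
    (hS : MeasurableSet S) (hSab : S ⊆ Ioc a b) (hf : IntegrableOn f S μ)
    (hc : c ∈ uIcc 0 (∫ x in S, f x ∂μ)) :
    ∃ T ⊆ S, MeasurableSet T ∧ ∫ x in T, f x ∂μ = c := by
  set Φ : ℝ → ℝ := fun t => ∫ x in a..t, S.indicator f x ∂μ
  have hΦ : ∀ t, a ≤ t → Φ t = ∫ x in Ioc a t ∩ S, f x ∂μ := fun t ht => by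
    simp only [Φ, intervalIntegral.integral_of_le ht, setIntegral_indicator hS]
  have hΦa : Φ a = 0 := intervalIntegral.integral_same
  have hΦb : Φ b = ∫ x in S, f x ∂μ := by rw [hΦ b hab, inter_eq_right.2 hSab]
  obtain ⟨t, ht, hΦt⟩ := intermediate_value_uIcc
    ((hf.integrable_indicator hS).continuous_primitive a).continuousOn
    (by rwa [hΦa, hΦb] : c ∈ uIcc (Φ a) (Φ b))
  rw [uIcc_of_le hab] at ht
  exact ⟨Ioc a t ∩ S, inter_subset_right, measurableSet_Ioc.inter hS, (hΦ t ht.1).symm.trans hΦt⟩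

variable {ι : Type*} [DecidableEq ι] [Countable ι] {C F G : Set ℝ} {A : ι → Set ℝ}
  {u : ι → ℝ → ℝ} {i j : ι} {a b r : ℝ}

lemma IsAllocation.not_isParetoOptimal_of_ratio (hA : IsAllocation μ C A) (hab : a ≤ b)
    (hC : C ⊆ Ioc a b) (hu : ∀ k, IntegrableOn (u k) C μ) (hij : i ≠ j)
    (hpos : ∀ x ∈ C, 0 < u j x) (hFm : MeasurableSet F) (hGm : MeasurableSet G)
    (hF : ∀ x ∈ F, r * u j x < u i x) (hG : ∀ x ∈ G, u i x ≤ r * u j x)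
    (hAG : μ (A i ∩ G) ≠ 0) (hAF : μ (A j ∩ F) ≠ 0) :
    ¬ IsParetoOptimal μ C u A := by
  have hint : ∀ k {T}, T ⊆ C → IntegrableOn (u k) T μ := fun k _ hT => (hu k).mono_set hT
  have hSC : A i ∩ G ⊆ C := inter_subset_left.trans (hA.subset i)
  have hTC : A j ∩ F ⊆ C := inter_subset_left.trans (hA.subset j)
  have hSm := (hA.measurableSet i).inter hGm
  have hTm := (hA.measurableSet j).inter hFm
  -- Swapping `P ⊆ A i ∩ G` for `Q ⊆ A j ∩ F`, both of `u j`-value `c`, leaves `j` indifferent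
  -- and strictly helps `i`.
  set c := min (∫ x in A i ∩ G, u j x ∂μ) (∫ x in A j ∩ F, u j x ∂μ)
  have hc : 0 < c := lt_min
    (setIntegral_pos_of_forall_pos hSm hAG (hint j hSC) fun x hx => hpos x (hSC hx))
    (setIntegral_pos_of_forall_pos hTm hAF (hint j hTC) fun x hx => hpos x (hTC hx))
  obtain ⟨P, hPS, hPm, hPc⟩ := exists_subset_setIntegral_eq hab hSm (hSC.trans hC) (hint j hSC)
    (Icc_subset_uIcc ⟨hc.le, min_le_left _ _⟩)
  obtain ⟨Q, hQT, hQm, hQc⟩ := exists_subset_setIntegral_eq hab hTm (hTC.trans hC) (hint j hTC)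
    (Icc_subset_uIcc ⟨hc.le, min_le_right _ _⟩)
  have hQ0 : μ Q ≠ 0 := fun h => hc.ne' (by rw [← hQc, setIntegral_measure_zero _ h])
  have hP : ∫ x in P, u i x ∂μ ≤ r * c := calc
    ∫ x in P, u i x ∂μ ≤ ∫ x in P, r * u j x ∂μ :=
      setIntegral_mono_on (hint i (hPS.trans hSC)) ((hint j (hPS.trans hSC)).const_mul r) hPm
        fun x hx => hG x (hPS hx).2
    _ = r * c := by rw [integral_const_mul, hPc]
  have hQ : r * c < ∫ x in Q, u i x ∂μ := by
    have := setIntegral_pos_of_forall_pos (f := fun x => u i x - r * u j x) hQm hQ0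
      ((hint i (hQT.trans hTC)).sub ((hint j (hQT.trans hTC)).const_mul r))
      fun x hx => sub_pos.2 (hF x (hQT hx).2)
    rw [integral_sub (hint i (hQT.trans hTC)) ((hint j (hQT.trans hTC)).const_mul r),
      integral_const_mul, hQc] at this
    linarith
  have hPA := hPS.trans inter_subset_left
  have hQA := hQT.trans inter_subset_left
  exact fun hPO => hPO _ (hA.exchange hij hPm hQm hPA hQA)
    (paretoDominates_exchange hA hij hPm hQm hPA hQA hu (hP.trans_lt hQ) (hQc.trans hPc.symm).le)

end RealLine

lemma dens_zero_apply (x : ℝ) : dens 0 x = 5 / 3 - 8 / 3 * min x (1 - x) := rfl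

lemma dens_one_apply (x : ℝ) : dens 1 x = 3 / 2 - 2 * min x (1 - x) := rfl

lemma dens_two_apply (x : ℝ) : dens 2 x = 1 := rfl

lemma continuous_dens : ∀ k, Continuous (dens k)
  | 0 => (by fun_prop : Continuous fun x : ℝ => 5 / 3 - 8 / 3 * min x (1 - x))
  | 1 => (by fun_prop : Continuous fun x : ℝ => 3 / 2 - 2 * min x (1 - x))
  | 2 => continuous_const

lemma min_one_sub_le_half (x : ℝ) : min x (1 - x) ≤ 1 / 2 :=
  min_le_iff.2 ((le_or_gt x (1 / 2)).imp id fun h => by linarith)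

lemma dens_pos : ∀ k x, 0 < dens k x
  | 0, x => by linarith [dens_zero_apply x, min_one_sub_le_half x]
  | 1, x => by linarith [dens_one_apply x, min_one_sub_le_half x]
  | 2, _ => one_pos

def outer : Set ℝ := Ico 0 (1 / 6) ∪ Ioc (5 / 6) 1

lemma measurableSet_outer : MeasurableSet outer := measurableSet_Ico.union measurableSet_Ioc

lemma outer_subset_Icc : outer ⊆ Icc 0 1 := by
  rintro x (⟨h0, h1⟩ | ⟨h0, h1⟩) <;> constructor <;> linarith

lemma mem_outer_iff {x : ℝ} (hx : x ∈ Icc (0 : ℝ) 1) : x ∈ outer ↔ min x (1 - x) < 1 / 6 := by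
  simp only [outer, mem_union, mem_Ico, mem_Ioc, min_lt_iff]
  obtain ⟨h0, h1⟩ := hx
  constructor
  · rintro (⟨-, h⟩ | ⟨h, -⟩)
    exacts [Or.inl h, Or.inr (by linarith)]
  · rintro (h | h)
    exacts [Or.inl ⟨h0, h⟩, Or.inr ⟨by linarith, h1⟩]

lemma min_lt_of_mem_outer {x : ℝ} (hx : x ∈ outer) : min x (1 - x) < 1 / 6 :=
  (mem_outer_iff (outer_subset_Icc hx)).1 hx

lemma le_min_of_mem_Icc_sdiff_outer {x : ℝ} (hx : x ∈ Icc 0 1 \ outer) : 1 / 6 ≤ min x (1 - x) :=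
  not_lt.1 ((mem_outer_iff hx.1).not.1 hx.2)

lemma volume_outer : volume outer = ENNReal.ofReal (1 / 3) := by
  rw [outer, measure_union (disjoint_left.2 fun x h₁ h₂ => by linarith [h₁.2, h₂.1])
    measurableSet_Ioc, Real.volume_Ico, Real.volume_Ioc, ← ENNReal.ofReal_add] <;> norm_num

/-- `dens 0 / dens j` decreases in `min x (1 - x)`; `r` is its value at `1/6`. -/
lemma exists_ratio_outer : ∀ j : Fin 3, j ≠ 0 → ∃ r : ℝ,
    (∀ x ∈ outer, r * dens j x < dens 0 x) ∧ ∀ x ∈ Icc 0 1 \ outer, dens 0 x ≤ r * dens j x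
  | 1, _ => ⟨22 / 21,
      fun x hx => by linarith [dens_zero_apply x, dens_one_apply x, min_lt_of_mem_outer hx],
      fun x hx => by
        linarith [dens_zero_apply x, dens_one_apply x, le_min_of_mem_Icc_sdiff_outer hx]⟩
  | 2, _ => ⟨11 / 9,
      fun x hx => by linarith [dens_zero_apply x, dens_two_apply x, min_lt_of_mem_outer hx],
      fun x hx => by
        linarith [dens_zero_apply x, dens_two_apply x, le_min_of_mem_Icc_sdiff_outer hx]⟩

lemma ae_eq_outer_of_isParetoOptimal {A : Fin 3 → Set ℝ} (hA : IsAllocation volume (Icc 0 1) A)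
    (hA0 : volume (A 0) = ENNReal.ofReal (1 / 3))
    (hPO : IsParetoOptimal volume (Icc 0 1) dens A) : A 0 =ᵐ[volume] outer := by
  have hinner : volume (A 0 ∩ (Icc 0 1 \ outer)) = 0 := by
    by_contra hG
    have hF : ∀ j, j ≠ 0 → volume (A j ∩ outer) = 0 := fun j hj => by
      by_contra hF
      obtain ⟨r, hr_out, hr_in⟩ := exists_ratio_outer j hj
      exact hA.not_isParetoOptimal_of_ratio (by norm_num : (-1 : ℝ) ≤ 1)
        (fun x hx => ⟨by linarith [hx.1], hx.2⟩) (fun k => (continuous_dens k).integrableOn_Icc)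
        hj.symm (fun x _ => dens_pos j x) measurableSet_outer
        (measurableSet_Icc.diff measurableSet_outer) hr_out hr_in hG hF hPO
    have houter : outer =ᵐ[volume] A 0 := ae_eq_of_ae_subset_of_measure_ge
      (hA.ae_subset_of_measure_inter_eq_zero outer_subset_Icc hF)
      (hA0.trans volume_outer.symm).le measurableSet_outer.nullMeasurableSet (by simp [hA0])
    exact hG ((measure_congr (houter.symm.inter (ae_eq_refl _))).trans
      (by rw [inter_sdiff_self, measure_empty]))
  exact ae_eq_of_ae_subset_of_measure_ge
    (ae_le_set.2 (measure_mono_null (fun x hx => ⟨hx.1, hA.subset 0 hx.1, hx.2⟩ :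
      A 0 \ outer ⊆ A 0 ∩ (Icc 0 1 \ outer)) hinner))
    (volume_outer.trans hA0.symm).le (hA.measurableSet 0).nullMeasurableSet (by simp [volume_outer])

lemma setIntegral_outer_dens_one : ∫ x in outer, dens 1 x = 4 / 9 := by
  set g : ℝ → ℝ := fun x => 3 / 2 - 2 * x
  have hg : ∫ x in (0 : ℝ)..1 / 6, g x = 2 / 9 := by
    rw [intervalIntegral.integral_sub intervalIntegrable_const
      (intervalIntegral.intervalIntegrable_id.const_mul 2), intervalIntegral.integral_const_mul,
      integral_id]
    norm_num
  have hleft : ∫ x in Ico (0 : ℝ) (1 / 6), dens 1 x = ∫ x in (0 : ℝ)..1 / 6, g x := by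
    rw [intervalIntegral.integral_of_le (by norm_num), ← setIntegral_congr_set Ico_ae_eq_Ioc]
    refine setIntegral_congr_fun measurableSet_Ico fun x hx => ?_
    rw [dens_one_apply, min_eq_left (by linarith [hx.2])]
  have hright : ∫ x in Ioc (5 / 6 : ℝ) 1, dens 1 x = ∫ x in (0 : ℝ)..1 / 6, g x := by
    rw [← intervalIntegral.integral_of_le (by norm_num),
      intervalIntegral.integral_congr (g := fun x => g (1 - x)) fun x hx => ?_,
      intervalIntegral.integral_comp_sub_left g 1]
    · norm_num
    · rw [uIcc_of_le (by norm_num)] at hx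
      rw [dens_one_apply, min_eq_right (by linarith [hx.1])]
  rw [outer, setIntegral_union (disjoint_left.2 fun x h₁ h₂ => by linarith [h₁.2, h₂.1])
    measurableSet_Ioc ((continuous_dens 1).integrableOn_Icc.mono_set Ico_subset_Icc_self)
    ((continuous_dens 1).integrableOn_Icc.mono_set Ioc_subset_Icc_self), hleft, hright, hg]
  norm_num

lemma setIntegral_dens_one_le {A : Fin 3 → Set ℝ} (hA : IsAllocation volume (Icc 0 1) A)
    (hA1 : volume (A 1) = ENNReal.ofReal (1 / 3)) (h0 : A 0 =ᵐ[volume] outer) :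
    ∫ x in A 1, dens 1 x ≤ 7 / 18 := by
  have hA1_outer : volume (A 1 ∩ outer) = 0 :=
    measure_mono_null (fun x hx => (em (x ∈ A 0)).imp (fun h => ⟨hx.1, h⟩) fun h => ⟨hx.2, h⟩)
      (measure_union_null (hA.measure_inter 1 0 (by decide)) (ae_eq_set.1 h0).2)
  have hle : ∀ᵐ x ∂volume, x ∈ A 1 → dens 1 x ≤ 7 / 6 := by
    filter_upwards [measure_eq_zero_iff_ae_notMem.1 hA1_outer] with x hx hxA
    linarith [dens_one_apply x,
      le_min_of_mem_Icc_sdiff_outer ⟨hA.subset 1 hxA, fun h => hx ⟨hxA, h⟩⟩]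
  calc ∫ x in A 1, dens 1 x ≤ ∫ x in A 1, (7 / 6 : ℝ) :=
        setIntegral_mono_on_ae ((continuous_dens 1).integrableOn_Icc.mono_set (hA.subset 1))
          (integrableOn_const (by simp [hA1])) (hA.measurableSet 1) hle
    _ = 7 / 18 := by
        rw [setIntegral_const, measureReal_def, hA1, ENNReal.toReal_ofReal (by norm_num)]
        norm_num

/-- In the 3-agent cake instance with densities `dens`, no allocation into
three measurable pieces of `[0,1]` is simultaneously balanced (each piece of
Lebesgue measure `1/3`), envy-free w.r.t. the subjective utilities, and
Pareto optimal w.r.t. the subjective utilities. -/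
theorem stmt_16 :
    ¬ ∃ A : Fin 3 → Set ℝ,
      (∀ i, MeasurableSet (A i)) ∧ (∀ i, A i ⊆ Icc 0 1) ∧
      volume (Icc (0 : ℝ) 1 \ ⋃ i, A i) = 0 ∧
      (∀ i j, i ≠ j → volume (A i ∩ A j) = 0) ∧
      -- balanced
      (∀ i, volume (A i) = ENNReal.ofReal (1 / 3)) ∧
      -- envy-free
      (∀ i j, (∫ x in A j, dens i x) ≤ ∫ x in A i, dens i x) ∧
      -- Pareto optimal
      ¬ ∃ B : Fin 3 → Set ℝ,
        (∀ i, MeasurableSet (B i)) ∧ (∀ i, B i ⊆ Icc 0 1) ∧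
        volume (Icc (0 : ℝ) 1 \ ⋃ i, B i) = 0 ∧
        (∀ i j, i ≠ j → volume (B i ∩ B j) = 0) ∧
        (∀ i, (∫ x in A i, dens i x) ≤ ∫ x in B i, dens i x) ∧
        (∃ i, (∫ x in A i, dens i x) < ∫ x in B i, dens i x) := by
  rintro ⟨A, hmeas, hsub, hcov, hdisj, hbal, hef, hpo⟩
  have hA : IsAllocation volume (Icc 0 1) A := ⟨hmeas, hsub, hcov, hdisj⟩
  have h0 : A 0 =ᵐ[volume] outer := ae_eq_outer_of_isParetoOptimal hA (hbal 0)
    fun B hB hdom => hpo ⟨B, hB.1, hB.2, hB.3, hB.4, hdom⟩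
  have henvy := hef 1 0
  rw [setIntegral_congr_set h0, setIntegral_outer_dens_one] at henvy
  linarith [setIntegral_dens_one_le hA (hbal 1) h0]
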